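/- arXiv:1506.05079 — 6 statements merged into one kernel-verified Lean document; each statement's English description precedes it below -/
import Mathlib

section
/- No word of length at most 6 over the alphabet {1,2,3} contains every permutation of {1,2,3} as a subsequence; hence the minimal length of a word containing all permutations of {1,2,3} as subsequences is 7. -/
def wordsUpTo {α : Type*} (A : List α) : ℕ → List (List α)
  | 0 => [[]]
  | n + 1 => [] :: (wordsUpTo A n).flatMap fun w => A.map (· :: w)

theorem mem_wordsUpTo {α : Type*} {A : List α} :
    ∀ {n : ℕ} {w : List α}, (∀ x ∈ w, x ∈ A) → w.length ≤ n → w ∈ wordsUpTo A n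
  | 0, [], _, _ => List.mem_singleton_self _
  | n + 1, [], _, _ => List.mem_cons_self
  | n + 1, a :: w, hw, hn => by
    have ha : a ∈ A := hw a List.mem_cons_self
    have hw' : w ∈ wordsUpTo A n :=
      mem_wordsUpTo (fun x hx => hw x (List.mem_cons_of_mem a hx)) (by simpa using hn)
    exact List.mem_cons_of_mem _ (List.mem_flatMap.2 ⟨w, hw', List.mem_map_of_mem ha⟩)

-- `permutations'` rather than `permutations`: the latter is defined by well-founded recursion
-- and does not reduce under `decide`.
theorem exists_perm_not_sublist_of_mem_wordsUpTo_six :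
    ∀ w ∈ wordsUpTo [1, 2, 3] 6, ∃ π ∈ [1, 2, 3].permutations', ¬ π.Sublist w := by
  decide +kernel

theorem sublist_1231213_of_mem_permutations'_123 :
    ∀ π ∈ [1, 2, 3].permutations', π.Sublist [1, 2, 3, 1, 2, 1, 3] := by
  decide

/-- No word of length ≤ 6 over {1,2,3} contains all permutations of {1,2,3} as
subsequences; hence the minimal length of such a universal word is 7. -/
theorem stmt_1 :
    (∀ w : List ℕ, (∀ x ∈ w, x ∈ ({1, 2, 3} : Set ℕ)) → w.length ≤ 6 →
      ∃ π : List ℕ, π.Perm [1, 2, 3] ∧ ¬ π.Sublist w) ∧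
    IsLeast {L : ℕ | ∃ w : List ℕ, (∀ x ∈ w, x ∈ ({1, 2, 3} : Set ℕ)) ∧
      w.length = L ∧ ∀ π : List ℕ, π.Perm [1, 2, 3] → π.Sublist w} 7 := by
  have no_short_universal : ∀ w : List ℕ, (∀ x ∈ w, x ∈ ({1, 2, 3} : Set ℕ)) →
      w.length ≤ 6 → ∃ π : List ℕ, π.Perm [1, 2, 3] ∧ ¬ π.Sublist w := by
    intro w hw hlen
    obtain ⟨π, hπ, hns⟩ := exists_perm_not_sublist_of_mem_wordsUpTo_six w
      (mem_wordsUpTo (by simpa using hw) hlen)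
    exact ⟨π, List.mem_permutations'.1 hπ, hns⟩
  refine ⟨no_short_universal, ⟨[1, 2, 3, 1, 2, 1, 3], by simp, rfl,
    fun π hπ => sublist_1231213_of_mem_permutations'_123 π (List.mem_permutations'.2 hπ)⟩, ?_⟩
  rintro L ⟨w, hw, rfl, huniv⟩
  by_contra! hshort
  obtain ⟨π, hπ, hns⟩ := no_short_universal w hw (by omega)
  exact hns (huniv π hπ)
end

section
/- For every n ≥ 1, any word over the alphabet {1,...,n} that contains every permutation of {1,...,n} as a subsequence has length at least 2n−1. -/
/-!
Let `a` be the letter whose first occurrence in `T` comes last. The first occurrences of the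
`n` letters are distinct positions, so this one is at index at least `n - 1`. The permutation
that starts with `a` and continues with the other `n - 1` letters must then fit `a` at or after
that index and the remaining `n - 1` letters strictly after it, so `T` has at least `2n - 1` letters.
-/

namespace List

variable {α : Type*} [DecidableEq α]

theorem exists_mem_length_le_idxOf_succ {L T : List α} (hL : L.Nodup) (hne : L ≠ [])
    (hLT : L ⊆ T) : ∃ a ∈ L, L.length ≤ T.idxOf a + 1 := by
  by_contra! hlt
  have hinj : Set.InjOn T.idxOf L.toFinset := fun x hx _ _ hxy =>
    (idxOf_inj (hLT (mem_toFinset.1 hx))).1 hxy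
  have hcard := Finset.card_le_card_of_injOn (t := Finset.range (L.length - 1)) T.idxOf
    (fun x hx => Finset.mem_range.2 (Nat.lt_sub_of_add_lt (hlt x (mem_toFinset.1 hx)))) hinj
  rw [toFinset_card_of_nodup hL, Finset.card_range] at hcard
  have := length_pos_iff.2 hne
  omega

theorem Sublist.idxOf_add_length_lt {a : α} {l T : List α} (h : (a :: l) <+ T) :
    T.idxOf a + l.length < T.length := by
  obtain ⟨r₁, r₂, rfl, har, hr₂⟩ := cons_sublist_iff.1 h
  have := idxOf_lt_length_iff.2 har
  have := hr₂.length_le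
  rw [idxOf_append_of_mem har, length_append]
  omega

theorem two_mul_length_sub_one_le_of_forall_perm_sublist {L T : List α} (hL : L.Nodup)
    (h : ∀ π : List α, π ~ L → π <+ T) : 2 * L.length - 1 ≤ T.length := by
  rcases eq_or_ne L [] with rfl | hne
  · simp
  obtain ⟨a, haL, hlast⟩ :=
    exists_mem_length_le_idxOf_succ hL hne fun x hx => (h L (Perm.refl L)).subset hx
  have hfirst := (h (a :: L.erase a) (perm_cons_erase haL).symm).idxOf_add_length_lt
  rw [length_erase_of_mem haL] at hfirst
  omega

end List

theorem stmt_8_general (n : ℕ) (T : List ℕ)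
    (h : ∀ π : List ℕ, π.Perm ((List.range n).map (· + 1)) → π.Sublist T) :
    2 * n - 1 ≤ T.length := by
  simpa using List.two_mul_length_sub_one_le_of_forall_perm_sublist
    ((List.nodup_range).map (add_left_injective 1)) h

/-- For n ≥ 1, any word over {1,...,n} containing every permutation of {1,...,n}
as a subsequence has length at least 2n-1. -/
theorem stmt_8 (n : ℕ) (hn : 1 ≤ n) (T : List ℕ)
    (hT : ∀ x ∈ T, x ∈ Finset.Icc 1 n)
    (h : ∀ π : List ℕ, π.Perm ((List.range n).map (· + 1)) → π.Sublist T) :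
    2 * n - 1 ≤ T.length :=
  stmt_8_general n T h
end

section
/- Fix n ≥ 1, sets H₁,...,H_n ⊆ {1,...,n}, and linear orders ≺₁,...,≺_{n−1} on {1,...,n}. For a linear order ≺, let ORD(≺) denote the word listing {1,...,n} in ≺-increasing order, and let ENC(S) denote a word listing the elements of a set S ⊆ {1,...,n} each exactly once. Define W = ENC(H₁ᶜ) · ORD(≺₁)ᴿ · ENC(H₂ᶜ) · ORD(≺₂)ᴿ · ⋯ · ORD(≺_{n−1})ᴿ · ENC(H_nᶜ), where ᴿ denotes word reversal and Sᶜ = {1,...,n} \ S. Then for every permutation π of {1,...,n}: π satisfies (π_i ∈ H_i for all i, and π_i ≺_i π_{i+1} for all 1 ≤ i ≤ n−1) if and only if π is NOT a subsequence of W. -/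
namespace Stmt12Aux

lemma pair_sub {x y : ℕ} : ∀ {L : List ℕ}, x ∈ L → y ∈ L → x ≠ y →
    [x, y].Sublist L ∨ [y, x].Sublist L := by
  intro L
  induction L with
  | nil => intro h; simp at h
  | cons a L ih =>
    intro hx hy hxy
    by_cases hxa : x = a
    · subst hxa
      have hyL : y ∈ L := by
        rcases List.mem_cons.1 hy with h | h
        · exact absurd h.symm hxy
        · exact h
      exact Or.inl ((List.singleton_sublist.2 hyL).cons₂ x)
    · by_cases hya : y = a
      · subst hya
        have hxL : x ∈ L := by
          rcases List.mem_cons.1 hx with h | h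
          exacts [absurd h hxa, h]
        exact Or.inr ((List.singleton_sublist.2 hxL).cons₂ y)
      · have hxL : x ∈ L := by
          rcases List.mem_cons.1 hx with h | h
          exacts [absurd h hxa, h]
        have hyL : y ∈ L := by
          rcases List.mem_cons.1 hy with h | h
          exacts [absurd h hya, h]
        rcases ih hxL hyL hxy with h | h
        · exact Or.inl (h.cons a)
        · exact Or.inr (h.cons a)

lemma FS (ord enc : ℕ → List ℕ) (m s : ℕ) :
    (List.range (m+1)).flatMap (fun j => (ord (s+j+1)).reverse ++ enc (s+j+2)) =
    ((ord (s+1)).reverse ++ enc (s+2)) ++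
      (List.range m).flatMap (fun j => (ord (s+1+j+1)).reverse ++ enc (s+1+j+2)) := by
  rw [List.range_succ_eq_map, List.flatMap_cons, List.flatMap_map]
  congr 1
  congr 1
  funext j
  have h1 : s + (j + 1) + 1 = s + 1 + j + 1 := by omega
  have h2 : s + (j + 1) + 2 = s + 1 + j + 2 := by omega
  rw [h1, h2]

lemma SPL (f : ℕ → List ℕ) (a b : ℕ) :
    (List.range (a+b)).flatMap f =
      (List.range a).flatMap f ++ (List.range b).flatMap (fun j => f (a+j)) := by
  rw [List.range_add, List.flatMap_append, List.flatMap_map]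

lemma embed (ord enc : ℕ → List ℕ) :
    ∀ (m s : ℕ) (l : List ℕ), l.length ≤ m → (∀ x ∈ l, ∀ j, x ∈ ord j) →
      l.Sublist ((List.range m).flatMap (fun j => (ord (s+j+1)).reverse ++ enc (s+j+2))) := by
  intro m
  induction m with
  | zero =>
    intro s l hl _
    have : l = [] := List.length_eq_zero_iff.1 (Nat.le_zero.1 hl)
    simp [this]
  | succ m ih =>
    intro s l hl hmem
    rw [FS ord enc m s]
    match l with
    | [] => exact List.nil_sublist _
    | x :: l' =>
      have hx : [x].Sublist ((ord (s+1)).reverse ++ enc (s+2)) :=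
        (List.singleton_sublist.2 (List.mem_reverse.2 (hmem x (by simp) (s+1)))).trans
          (List.sublist_append_left _ _)
      have h2 := ih (s+1) l' (by simpa using hl)
        (fun y hy j => hmem y (List.mem_cons_of_mem _ hy) j)
      simpa using List.Sublist.append hx h2

lemma embed2 (ord enc : ℕ → List ℕ) :
    ∀ (m s : ℕ) (l : List ℕ) (y : ℕ), l.length ≤ m + 1 →
      (∀ x ∈ l, ∀ j, x ∈ ord j) → y ∈ enc (s+m+2) →
      (l ++ [y]).Sublist
        ((List.range (m+1)).flatMap (fun j => (ord (s+j+1)).reverse ++ enc (s+j+2))) := by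
  intro m
  induction m with
  | zero =>
    intro s l y hl hmem hy
    have hrw : (List.range 1).flatMap (fun j => (ord (s+j+1)).reverse ++ enc (s+j+2)) =
        (ord (s+1)).reverse ++ enc (s+2) := by
      rw [show List.range 1 = [0] from by simp [List.range_succ], List.flatMap_cons,
        List.flatMap_nil, List.append_nil]
    rw [hrw]
    have hy' : y ∈ enc (s+2) := by simpa using hy
    match l with
    | [] => exact List.sublist_append_of_sublist_right (List.singleton_sublist.2 hy')
    | [x] =>
      have hx : [x].Sublist (ord (s+1)).reverse :=
        List.singleton_sublist.2 (List.mem_reverse.2 (hmem x (by simp) (s+1)))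
      exact List.Sublist.append hx (List.singleton_sublist.2 hy')
    | x :: z :: l' =>
      exfalso
      have : l'.length + 2 ≤ 1 := by simpa using hl
      omega
  | succ m ih =>
    intro s l y hl hmem hy
    rw [FS ord enc (m+1) s]
    have hy' : y ∈ enc (s+1+m+2) := by
      rwa [show s+1+m+2 = s+(m+1)+2 from by omega]
    match l with
    | [] =>
      have h := ih (s+1) [] y (by simp) (by simp) hy'
      exact List.sublist_append_of_sublist_right (by simpa using h)
    | x :: l' =>
      have hx : [x].Sublist ((ord (s+1)).reverse ++ enc (s+2)) :=
        (List.singleton_sublist.2 (List.mem_reverse.2 (hmem x (by simp) (s+1)))).trans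
          (List.sublist_append_left _ _)
      have h2 := ih (s+1) l' y (by simpa using hl)
        (fun z hz j => hmem z (List.mem_cons_of_mem _ hz) j) hy'
      simpa using List.Sublist.append hx h2

lemma hard (n : ℕ) (H : ℕ → Finset ℕ) (r : ℕ → ℕ → ℕ → Prop)
    (hasym : ∀ j x y, r j x y → ¬ r j y x)
    (ord : ℕ → List ℕ) (hords : ∀ j, (ord j).Pairwise (r j))
    (enc : ℕ → List ℕ) (hencm : ∀ i x, x ∈ enc i ↔ x ∈ Finset.Icc 1 n \ H i)
    (π : List ℕ) (hlen : π.length = n)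
    (hA : ∀ i < n, π[i]! ∈ H (i+1))
    (hB : ∀ i, i + 1 < n → r (i+1) (π[i]!) (π[i+1]!)) :
    ∀ (d k : ℕ), k < n → n - 1 - k = d →
      ¬ ((π.drop k).Sublist (enc (k+1) ++
        (List.range (n-1-k)).flatMap (fun j => (ord (k+j+1)).reverse ++ enc (k+j+2)))) := by
  intro d
  induction d with
  | zero =>
    intro k hk hd hsub
    have hk' : k < π.length := by omega
    have hdk : π.drop k = π[k] :: π.drop (k+1) := List.drop_eq_getElem_cons hk'
    have hkH : π[k] ∈ H (k+1) := by
      have := hA k hk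
      rwa [getElem!_pos π k hk'] at this
    have hknenc : π[k] ∉ enc (k+1) := fun hc =>
      (Finset.mem_sdiff.1 ((hencm _ _).1 hc)).2 hkH
    -- k = n-1, so the flatMap part is empty
    have hzero : n - 1 - k = 0 := hd
    rw [hzero] at hsub
    simp only [List.range_zero, List.flatMap_nil, List.append_nil] at hsub
    rw [hdk] at hsub
    exact hknenc (hsub.subset List.mem_cons_self)
  | succ d ih =>
    intro k hk hd hsub
    have hk1 : k + 1 < n := by omega
    have hk' : k < π.length := by omega
    have hk1' : k + 1 < π.length := by omega
    have hdk : π.drop k = π[k] :: π.drop (k+1) := List.drop_eq_getElem_cons hk'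
    have hdk1 : π.drop (k+1) = π[k+1] :: π.drop (k+2) := List.drop_eq_getElem_cons hk1'
    have hkH : π[k] ∈ H (k+1) := by
      have := hA k hk
      rwa [getElem!_pos π k hk'] at this
    have hknenc : π[k] ∉ enc (k+1) := fun hc =>
      (Finset.mem_sdiff.1 ((hencm _ _).1 hc)).2 hkH
    have hrk : r (k+1) (π[k]) (π[k+1]) := by
      have := hB k hk1
      rwa [getElem!_pos π k hk', getElem!_pos π (k+1) hk1'] at this
    -- strip the enc (k+1) block
    obtain ⟨l1, l2, heq, hl1, hl2⟩ := List.sublist_append_iff.1 hsub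
    have hsub2 : (π.drop k).Sublist
        ((List.range (n-1-k)).flatMap (fun j => (ord (k+j+1)).reverse ++ enc (k+j+2))) := by
      rcases l1 with _ | ⟨a, t⟩
      · simp only [List.nil_append] at heq
        rw [heq]; exact hl2
      · exfalso
        rw [hdk, List.cons_append] at heq
        injection heq with h1 _
        exact hknenc (h1 ▸ hl1.subset List.mem_cons_self)
    clear hsub heq hl1 hl2 l1 l2
    -- unfold one ord/enc block
    rw [show n - 1 - k = (n - 1 - (k+1)) + 1 from by omega, FS ord enc (n-1-(k+1)) k,
      List.append_assoc] at hsub2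
    obtain ⟨l1, l2, heq, hl1, hl2⟩ := List.sublist_append_iff.1 hsub2
    rw [hdk, hdk1] at heq
    have IH := ih (k+1) hk1 (by omega)
    rw [show k+1+1 = k+2 from by omega] at IH
    rcases l1 with _ | ⟨a, _ | ⟨b, t⟩⟩
    · simp only [List.nil_append] at heq
      subst heq
      apply IH
      rw [hdk1]
      exact (List.sublist_cons_self _ _).trans hl2
    · simp only [List.cons_append, List.nil_append] at heq
      injection heq with h1 h2
      subst h2
      apply IH
      rw [hdk1]
      exact hl2
    · simp only [List.cons_append] at heq
      injection heq with h1 heq'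
      injection heq' with h2 _
      have hpair : [π[k], π[k+1]].Sublist (a :: b :: t) := by
        rw [h1, h2]
        exact ((List.nil_sublist t).cons₂ b).cons₂ a
      have hpair2 : [π[k], π[k+1]].Sublist (ord (k+1)).reverse := hpair.trans hl1
      have hpair3 : [π[k+1], π[k]].Sublist (ord (k+1)) := by
        have := hpair2.reverse
        simpa using this
      have hpw := List.Pairwise.sublist hpair3 (hords (k+1))
      have hba : r (k+1) (π[k+1]) (π[k]) :=
        (List.pairwise_cons.1 hpw).1 _ List.mem_cons_self
      exact hasym _ _ _ hrk hba

end Stmt12Aux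

/-- The reduction word W = ENC(H₁ᶜ)·ORD(≺₁)ᴿ·ENC(H₂ᶜ)·⋯·ORD(≺_{n-1})ᴿ·ENC(H_nᶜ):
a permutation π of {1,...,n} satisfies the Locally Constrained Permutation
instance (π_i ∈ H_i for all i and π_i ≺_i π_{i+1} for all i < n) iff π is not a
subsequence of W. Here `ord j` lists {1,...,n} in ≺_j-increasing order and
`enc i` lists the complement of H_i in {1,...,n}. Positions and constraint
orders are 1-based. -/
theorem stmt_12 (n : ℕ) (hn : 1 ≤ n)
    (H : ℕ → Finset ℕ) (hH : ∀ i, H i ⊆ Finset.Icc 1 n)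
    (r : ℕ → ℕ → ℕ → Prop)
    (hasym : ∀ j x y, r j x y → ¬ r j y x)
    (ord : ℕ → List ℕ)
    (hordp : ∀ j, (ord j).Perm ((List.range n).map (· + 1)))
    (hords : ∀ j, (ord j).Pairwise (r j))
    (enc : ℕ → List ℕ)
    (hencd : ∀ i, (enc i).Nodup)
    (hencm : ∀ i x, x ∈ enc i ↔ x ∈ Finset.Icc 1 n \ H i)
    (W : List ℕ)
    (hW : W = enc 1 ++
      (List.range (n - 1)).flatMap (fun j => (ord (j + 1)).reverse ++ enc (j + 2))) :
    ∀ π : List ℕ, π.Perm ((List.range n).map (· + 1)) →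
      (((∀ i < n, π[i]! ∈ H (i + 1)) ∧
        (∀ i, i + 1 < n → r (i + 1) (π[i]!) (π[i + 1]!))) ↔ ¬ π.Sublist W) := by
  intro π hperm
  have hlen : π.length = n := by
    have := hperm.length_eq
    simpa using this
  have hmemord : ∀ x ∈ π, ∀ j, x ∈ ord j := by
    intro x hx j
    exact (hordp j).mem_iff.2 (hperm.mem_iff.1 hx)
  have hmemIcc : ∀ x ∈ π, x ∈ Finset.Icc 1 n := by
    intro x hx
    have := hperm.mem_iff.1 hx
    simp only [List.mem_map, List.mem_range] at this
    obtain ⟨i, hi, rfl⟩ := this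
    simp; omega
  have hnd : π.Nodup := hperm.nodup_iff.2
    ((List.nodup_range : (List.range n).Nodup).map (fun a b h => by omega))
  constructor
  · rintro ⟨hA, hB⟩ hsub
    apply Stmt12Aux.hard n H r hasym ord hords enc hencm π hlen hA hB (n-1) 0
      (by omega) (by omega)
    rw [hW] at hsub
    simpa using hsub
  · intro hnsub
    by_contra hcon
    apply hnsub
    rw [not_and_or] at hcon
    rcases hcon with hcon | hcon
    · -- some π[k] ∉ H (k+1)
      push_neg at hcon
      obtain ⟨k, hk, hkH⟩ := hcon
      have hk' : k < π.length := by omega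
      rw [getElem!_pos π k hk'] at hkH
      have hkenc : π[k] ∈ enc (k+1) := (hencm _ _).2
        (Finset.mem_sdiff.2 ⟨hmemIcc _ (π.getElem_mem hk'), hkH⟩)
      rw [hW]
      rcases Nat.eq_zero_or_pos k with rfl | hkpos
      · -- π[0] goes into enc 1
        have h1 : [π[0]].Sublist (enc 1) := List.singleton_sublist.2 hkenc
        have h2 := Stmt12Aux.embed ord enc (n-1) 0 (π.drop 1)
          (by simp [hlen]) (fun x hx j => hmemord x (List.drop_subset _ _ hx) j)
        simp only [Nat.zero_add] at h2
        have hπ : π = [π[0]] ++ π.drop 1 := by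
          have := List.drop_eq_getElem_cons hk'
          rw [List.drop_zero] at this
          simp only [List.singleton_append]
          exact this
        rw [hπ]
        exact List.Sublist.append h1 h2
      · -- π.take k ++ [π[k]] into enc1..ord(k)ᴿ enc(k+1); rest one per ord block
        have hπ : π = (π.take k ++ [π[k]]) ++ π.drop (k+1) := by
          rw [List.append_assoc]
          simp only [List.singleton_append]
          rw [← List.drop_eq_getElem_cons hk', List.take_append_drop]
        have h1 := Stmt12Aux.embed2 ord enc (k-1) 0 (π.take k) (π[k])
          (by simp [hlen]; omega) (fun x hx j => hmemord x (List.take_subset _ _ hx) j)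
          (by rwa [show 0+(k-1)+2 = k+1 from by omega])
        rw [show k-1+1 = k from by omega] at h1
        simp only [Nat.zero_add] at h1
        have h2 := Stmt12Aux.embed ord enc (n-1-k) k (π.drop (k+1))
          (by simp [hlen]; omega) (fun x hx j => hmemord x (List.drop_subset _ _ hx) j)
        rw [show n - 1 = k + (n-1-k) from by omega,
          Stmt12Aux.SPL (fun j => (ord (j+1)).reverse ++ enc (j+2)) k (n-1-k)]
        beta_reduce
        rw [hπ]
        refine List.sublist_append_of_sublist_right ?_
        exact List.Sublist.append h1 h2
    · -- some order constraint fails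
      push_neg at hcon
      obtain ⟨k, hk1, hkr⟩ := hcon
      have hk' : k < π.length := by omega
      have hk1' : k + 1 < π.length := by omega
      rw [getElem!_pos π k hk', getElem!_pos π (k+1) hk1'] at hkr
      have hne : π[k] ≠ π[k+1] := by
        intro h
        have := (List.Nodup.getElem_inj_iff hnd).1 h
        omega
      have hpair : [π[k], π[k+1]].Sublist (ord (k+1)).reverse := by
        rcases Stmt12Aux.pair_sub (hmemord _ (π.getElem_mem hk') (k+1))
            (hmemord _ (π.getElem_mem hk1') (k+1)) hne with h | h
        · exact absurd ((List.pairwise_cons.1 (List.Pairwise.sublist h (hords (k+1)))).1 _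
            List.mem_cons_self) hkr
        · have := h.reverse
          simpa using this
      have hπ : π = π.take k ++ ([π[k], π[k+1]] ++ π.drop (k+2)) := by
        rw [show ([π[k], π[k+1]] ++ π.drop (k+2)) = π[k] :: (π[k+1] :: π.drop (k+2)) from rfl,
          ← List.drop_eq_getElem_cons hk1', ← List.drop_eq_getElem_cons hk',
          List.take_append_drop]
      have h1 := Stmt12Aux.embed ord enc k 0 (π.take k)
        (by simp [hlen]) (fun x hx j => hmemord x (List.take_subset _ _ hx) j)
      simp only [Nat.zero_add] at h1
      have h2 := Stmt12Aux.embed ord enc (n-2-k) (k+1) (π.drop (k+2))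
        (by simp [hlen]; omega) (fun x hx j => hmemord x (List.drop_subset _ _ hx) j)
      have hmid : ([π[k], π[k+1]] ++ π.drop (k+2)).Sublist
          (((ord (k+1)).reverse ++ enc (k+2)) ++
            (List.range (n-2-k)).flatMap (fun j => (ord (k+1+j+1)).reverse ++ enc (k+1+j+2))) :=
        List.Sublist.append (hpair.trans (List.sublist_append_left _ _)) h2
      rw [hW, show n - 1 = k + (n-1-k) from by omega,
        Stmt12Aux.SPL (fun j => (ord (j+1)).reverse ++ enc (j+2)) k (n-1-k)]
      beta_reduce
      rw [show n - 1 - k = (n-2-k) + 1 from by omega,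
        Stmt12Aux.FS ord enc (n-2-k) k, ← List.append_assoc]
      rw [hπ]
      exact List.Sublist.append (List.sublist_append_of_sublist_right h1) hmid
end

section
/- With W defined as the concatenation ENC(H₁ᶜ)·ORD(≺₁)ᴿ·ENC(H₂ᶜ)·⋯·ORD(≺_{n−1})ᴿ·ENC(H_nᶜ) (notation as follows), the word W contains every word of length n−1 over the alphabet {1,...,n} as a subsequence. -/
/-! Every block `ORD(≺ⱼ)ᴿ` is a permutation of the whole alphabet and there are `n - 1` of
them, so a word of length `n - 1` can be embedded greedily, taking its `j`-th letter from the
`j`-th block. -/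

theorem List.sublist_flatten_of_forall_mem {α : Type*} :
    ∀ (w : List α) (bs : List (List α)),
      w.length ≤ bs.length → (∀ x ∈ w, ∀ b ∈ bs, x ∈ b) → w.Sublist bs.flatten
  | [], _, _, _ => List.nil_sublist _
  | _ :: _, [], hlen, _ => absurd hlen (by simp)
  | a :: w, b :: bs, hlen, hmem => by
    have head : [a].Sublist b := List.singleton_sublist.2 (hmem a (by simp) b (by simp))
    have tail : w.Sublist bs.flatten :=
      List.sublist_flatten_of_forall_mem w bs (by simpa using hlen)
        fun x hx c hc => hmem x (by simp [hx]) c (by simp [hc])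
    simpa using head.append tail

theorem stmt_13_general (n : ℕ)
    (ord : ℕ → List ℕ)
    (hordp : ∀ j, (ord j).Perm ((List.range n).map (· + 1)))
    (enc : ℕ → List ℕ)
    (W : List ℕ)
    (hW : W = enc 1 ++
      (List.range (n - 1)).flatMap (fun j => (ord (j + 1)).reverse ++ enc (j + 2))) :
    ∀ w : List ℕ, w.length = n - 1 → (∀ x ∈ w, x ∈ Finset.Icc 1 n) →
      w.Sublist W := by
  intro w hlen hmem
  subst hW
  refine List.Sublist.trans ?_ (List.sublist_append_right _ _)
  rw [List.flatMap_def]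
  refine List.sublist_flatten_of_forall_mem w _ (by simp [hlen]) fun x hx b hb => ?_
  obtain ⟨j, -, rfl⟩ := List.mem_map.1 hb
  have hx' := Finset.mem_Icc.1 (hmem x hx)
  have hx_ord : x ∈ ord (j + 1) := (hordp (j + 1)).mem_iff.2 <|
    List.mem_map.2 ⟨x - 1, List.mem_range.2 (by omega), by omega⟩
  simp [hx_ord]

/-- The reduction word W = ENC(H₁ᶜ)·ORD(≺₁)ᴿ·ENC(H₂ᶜ)·⋯·ORD(≺_{n-1})ᴿ·ENC(H_nᶜ)
contains every word of length n-1 over the alphabet {1,...,n} as a subsequence. -/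
theorem stmt_13 (n : ℕ) (hn : 1 ≤ n)
    (H : ℕ → Finset ℕ) (hH : ∀ i, H i ⊆ Finset.Icc 1 n)
    (r : ℕ → ℕ → ℕ → Prop)
    (ord : ℕ → List ℕ)
    (hordp : ∀ j, (ord j).Perm ((List.range n).map (· + 1)))
    (hords : ∀ j, (ord j).Pairwise (r j))
    (enc : ℕ → List ℕ)
    (hencd : ∀ i, (enc i).Nodup)
    (hencm : ∀ i x, x ∈ enc i ↔ x ∈ Finset.Icc 1 n \ H i)
    (W : List ℕ)
    (hW : W = enc 1 ++
      (List.range (n - 1)).flatMap (fun j => (ord (j + 1)).reverse ++ enc (j + 2))) :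
    ∀ w : List ℕ, w.length = n - 1 → (∀ x ∈ w, x ∈ Finset.Icc 1 n) →
      w.Sublist W :=
  stmt_13_general n ord hordp enc W hW
end

section
/- If π is a permutation of {1,...,n} that is a subsequence of W (W as defined below) via an embedding i₁ < i₂ < ⋯ < i_n into positions of W, then at least one of the following holds: (a) some position i_j lies inside a block ENC(H_jᶜ) with matching block index j, so π_j ∉ H_j; or (b) there is a j such that both i_j and i_{j+1} lie inside the block ORD(≺_j)ᴿ, so π_{j+1} ≺_j π_j. -/
/-!
Suppose neither (a) nor (b) holds. Then, by induction on `j`, the `j`-th letter of the embedding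
lies beyond the block `ENC(H_{j+1}ᶜ)`: it cannot lie inside that block by (a), and if the
previous letter lies beyond `ENC(H_jᶜ)`, the next one cannot still sit in `ORD(≺_j)ᴿ` by (b).
For the last letter this places it beyond the end of `W`, which is absurd.
-/

/-- The induction above, for arbitrary blocks `[a j, b j)` and gaps `[b j, a (j + 1))`. -/
theorem exists_mem_block_or_gap {a b f : ℕ → ℕ} {m : ℕ} (h0 : a 0 ≤ f 0) (hm : f m < b m) :
    (∃ j ≤ m, a j ≤ f j ∧ f j < b j) ∨ ∃ j < m, b j ≤ f j ∧ f (j + 1) < a (j + 1) := by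
  by_contra! h
  obtain ⟨hblock, hgap⟩ := h
  have hpast : ∀ j ≤ m, b j ≤ f j := by
    intro j hj
    induction j with
    | zero => exact hblock 0 hj h0
    | succ j ih => exact hblock _ hj (hgap j hj (ih (by omega)))
  exact absurd (hpast m le_rfl) (not_le.mpr hm)

namespace List

variable {α : Type*}

theorem append_flatMap_range_eq (a b : ℕ → List α) (m : ℕ) :
    a 0 ++ (range m).flatMap (fun j => b j ++ a (j + 1)) =
      (range m).flatMap (fun j => a j ++ b j) ++ a m := by
  induction m with
  | zero => simp
  | succ m ih => simp [range_succ, flatMap_append, ← append_assoc, ih]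

theorem getElem?_flatMap_range_append_sum_add (B : ℕ → List α) (c : List α) {k m i : ℕ}
    (hk : k < m) (hi : i < (B k).length) :
    ((range m).flatMap B ++ c)[((range k).map fun t => (B t).length).sum + i]? = (B k)[i]? := by
  obtain ⟨d, rfl⟩ := Nat.exists_eq_add_of_le hk
  rw [range_add, range_succ, flatMap_append, flatMap_append, flatMap_singleton, append_assoc,
    append_assoc, getElem?_append_right (by rw [length_flatMap]; omega), length_flatMap,
    Nat.add_sub_cancel_left, getElem?_append_left hi]

theorem Pairwise.rel_of_getElem?_eq_some {R : α → α → Prop} {l : List α} (h : l.Pairwise R)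
    {i j : ℕ} {x y : α} (hij : i < j) (hx : l[i]? = some x) (hy : l[j]? = some y) : R x y := by
  obtain ⟨hi, rfl⟩ := getElem?_eq_some_iff.mp hx
  obtain ⟨hj, rfl⟩ := getElem?_eq_some_iff.mp hy
  exact pairwise_iff_getElem.mp h i j hi hj hij

end List

open List

/-- The word `W`, with `ord j` the list `ORD(≺_j)` and `enc j` the list `ENC(H_jᶜ)`. -/
def word (n : ℕ) (ord enc : ℕ → List ℕ) : List ℕ :=
  enc 1 ++ (range (n - 1)).flatMap fun j => (ord (j + 1)).reverse ++ enc (j + 2)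

/-- The offset `A (j + 1)` of the block `enc (j + 1)` in `word n ord enc`. -/
def encStart (n : ℕ) (enc : ℕ → List ℕ) (j : ℕ) : ℕ :=
  ((range j).map fun t => (enc (t + 1)).length + n).sum

section Word

variable {n j : ℕ} {ord enc : ℕ → List ℕ}

theorem word_eq_flatMap_append (hn : 1 ≤ n) :
    word n ord enc = (range (n - 1)).flatMap (fun t => enc (t + 1) ++ (ord (t + 1)).reverse) ++
      enc n :=
  (append_flatMap_range_eq (fun j => enc (j + 1)) (fun j => (ord (j + 1)).reverse) _).trans
    (by rw [Nat.sub_add_cancel hn])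

theorem encStart_eq_sum_length (hord : ∀ j, (ord j).length = n) (j : ℕ) :
    encStart n enc j =
      ((range j).map fun t => (enc (t + 1) ++ (ord (t + 1)).reverse).length).sum := by
  simp [encStart, hord]

theorem encStart_succ : encStart n enc (j + 1) = encStart n enc j + (enc (j + 1)).length + n := by
  simp [encStart, range_succ, add_assoc]

theorem length_word (hord : ∀ j, (ord j).length = n) (hn : 1 ≤ n) :
    (word n ord enc).length = encStart n enc (n - 1) + (enc n).length := by
  simp [word_eq_flatMap_append hn, encStart_eq_sum_length hord, length_flatMap]

theorem getElem?_word_encStart_add (hord : ∀ j, (ord j).length = n) (hj : j < n) {i : ℕ}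
    (hi : i < (enc (j + 1)).length) :
    (word n ord enc)[encStart n enc j + i]? = (enc (j + 1))[i]? := by
  rw [word_eq_flatMap_append (by omega), encStart_eq_sum_length hord]
  obtain hj' | rfl : j < n - 1 ∨ j = n - 1 := by omega
  · rw [getElem?_flatMap_range_append_sum_add _ _ hj'
      (by simp only [length_append]; omega), getElem?_append_left hi]
  · rw [getElem?_append_right (by rw [length_flatMap]; omega), length_flatMap,
      Nat.add_sub_cancel_left, Nat.sub_add_cancel (by omega)]

theorem getElem?_word_ordStart_add (hord : ∀ j, (ord j).length = n) (hj : j + 1 < n) {i : ℕ}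
    (hi : i < n) :
    (word n ord enc)[encStart n enc j + (enc (j + 1)).length + i]? = (ord (j + 1)).reverse[i]? := by
  rw [word_eq_flatMap_append (by omega), encStart_eq_sum_length hord, add_assoc,
    getElem?_flatMap_range_append_sum_add _ _ (by omega)
      (by simp only [length_append, length_reverse, hord]; omega),
    getElem?_append_right (by omega), Nat.add_sub_cancel_left]

theorem mem_enc_of_getElem?_word (hord : ∀ j, (ord j).length = n) (hj : j < n) {p x : ℕ}
    (hlo : encStart n enc j ≤ p) (hhi : p < encStart n enc j + (enc (j + 1)).length)
    (hx : (word n ord enc)[p]? = some x) : x ∈ enc (j + 1) := by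
  obtain ⟨i, rfl⟩ := Nat.exists_eq_add_of_le hlo
  rw [getElem?_word_encStart_add hord hj (by omega)] at hx
  exact mem_of_getElem? hx

theorem rel_of_getElem?_word {R : ℕ → ℕ → Prop} (hord : ∀ j, (ord j).length = n)
    (hsort : (ord (j + 1)).Pairwise R) (hj : j + 1 < n) {p q x y : ℕ}
    (hlo : encStart n enc j + (enc (j + 1)).length ≤ p) (hpq : p < q)
    (hhi : q < encStart n enc (j + 1))
    (hx : (word n ord enc)[p]? = some x) (hy : (word n ord enc)[q]? = some y) : R y x := by
  rw [encStart_succ] at hhi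
  obtain ⟨i, rfl⟩ := Nat.exists_eq_add_of_le hlo
  obtain ⟨k, rfl⟩ := Nat.exists_eq_add_of_le (hlo.trans hpq.le)
  rw [getElem?_word_ordStart_add hord hj (by omega)] at hx hy
  exact (pairwise_reverse.mpr hsort).rel_of_getElem?_eq_some (by omega) hx hy

end Word

theorem stmt_14_general (n : ℕ) (hn : 1 ≤ n)
    (H : ℕ → Finset ℕ)
    (r : ℕ → ℕ → ℕ → Prop)
    (ord : ℕ → List ℕ)
    (hordp : ∀ j, (ord j).Perm ((List.range n).map (· + 1)))
    (hords : ∀ j, (ord j).Pairwise (r j))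
    (enc : ℕ → List ℕ)
    (hencm : ∀ i x, x ∈ enc i ↔ x ∈ Finset.Icc 1 n \ H i)
    (W : List ℕ)
    (hW : W = enc 1 ++
      (List.range (n - 1)).flatMap (fun j => (ord (j + 1)).reverse ++ enc (j + 2)))
    (π : List ℕ) (hπ : π.Perm ((List.range n).map (· + 1)))
    (f : ℕ → ℕ)
    (hmono : ∀ a b, a < b → b < n → f a < f b)
    (hemb : ∀ m < n, W[f m]? = π[m]?) :
    let A : ℕ → ℕ := fun m =>
      ((List.range (m - 1)).map (fun t => (enc (t + 1)).length + n)).sum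
    (∃ j < n, A (j + 1) ≤ f j ∧ f j < A (j + 1) + (enc (j + 1)).length ∧
        π[j]! ∉ H (j + 1)) ∨
    (∃ j, j + 1 < n ∧ A (j + 1) + (enc (j + 1)).length ≤ f j ∧
        f (j + 1) < A (j + 2) ∧ r (j + 1) (π[j + 1]!) (π[j]!)) := by
  intro A
  obtain rfl : W = word n ord enc := hW
  have hord (j : ℕ) : (ord j).length = n := by simpa using (hordp j).length_eq
  have hπlen : π.length = n := by simpa using hπ.length_eq
  have hval (j : ℕ) (hj : j < n) : (word n ord enc)[f j]? = some π[j]! := by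
    rw [hemb j hj, getElem!_pos π j (by omega), getElem?_eq_getElem]
  have hlast : f (n - 1) < encStart n enc (n - 1) + (enc (n - 1 + 1)).length := by
    rw [Nat.sub_add_cancel hn, ← length_word hord hn]
    exact (List.getElem?_eq_some_iff.mp (hval _ (by omega))).1
  rcases exists_mem_block_or_gap (a := encStart n enc)
      (b := fun j => encStart n enc j + (enc (j + 1)).length) (by simp [encStart]) hlast with
    ⟨j, hj, hlo, hhi⟩ | ⟨j, hj, hlo, hhi⟩
  · have hmem :=
      (hencm _ _).mp (mem_enc_of_getElem?_word hord (by omega) hlo hhi (hval j (by omega)))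
    exact .inl ⟨j, by omega, hlo, hhi, (Finset.mem_sdiff.mp hmem).2⟩
  · exact .inr ⟨j, by omega, hlo, hhi, rel_of_getElem?_word hord (hords (j + 1)) (by omega) hlo
      (hmono j (j + 1) (by omega) (by omega)) hhi (hval j (by omega)) (hval (j + 1) (by omega))⟩

/-- If a permutation π of {1,...,n} embeds into
W = ENC(H₁ᶜ)·ORD(≺₁)ᴿ·ENC(H₂ᶜ)·⋯·ORD(≺_{n-1})ᴿ·ENC(H_nᶜ) via an increasing
sequence of positions f 0 < f 1 < ⋯ < f (n-1), then either (a) some f j lies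
inside the block ENC(H_{j+1}ᶜ) (1-based index j+1), whence π_j ∉ H_{j+1}, or
(b) for some j both f j and f (j+1) lie inside the block ORD(≺_{j+1})ᴿ, whence
π_{j+1} ≺_{j+1} π_j.  Here `A m` is the starting offset of the block
ENC(H_mᶜ) in W. -/
theorem stmt_14 (n : ℕ) (hn : 1 ≤ n)
    (H : ℕ → Finset ℕ) (hH : ∀ i, H i ⊆ Finset.Icc 1 n)
    (r : ℕ → ℕ → ℕ → Prop)
    (hasym : ∀ j x y, r j x y → ¬ r j y x)
    (ord : ℕ → List ℕ)
    (hordp : ∀ j, (ord j).Perm ((List.range n).map (· + 1)))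
    (hords : ∀ j, (ord j).Pairwise (r j))
    (enc : ℕ → List ℕ)
    (hencd : ∀ i, (enc i).Nodup)
    (hencm : ∀ i x, x ∈ enc i ↔ x ∈ Finset.Icc 1 n \ H i)
    (W : List ℕ)
    (hW : W = enc 1 ++
      (List.range (n - 1)).flatMap (fun j => (ord (j + 1)).reverse ++ enc (j + 2)))
    (π : List ℕ) (hπ : π.Perm ((List.range n).map (· + 1)))
    (f : ℕ → ℕ)
    (hmono : ∀ a b, a < b → b < n → f a < f b)
    (hemb : ∀ m < n, W[f m]? = π[m]?) :
    let A : ℕ → ℕ := fun m =>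
      ((List.range (m - 1)).map (fun t => (enc (t + 1)).length + n)).sum
    (∃ j < n, A (j + 1) ≤ f j ∧ f j < A (j + 1) + (enc (j + 1)).length ∧
        π[j]! ∉ H (j + 1)) ∨
    (∃ j, j + 1 < n ∧ A (j + 1) + (enc (j + 1)).length ≤ f j ∧
        f (j + 1) < A (j + 2) ∧ r (j + 1) (π[j + 1]!) (π[j]!)) :=
  stmt_14_general n hn H r ord hordp hords enc hencm W hW π hπ f hmono hemb
end

section
/- Dummy position lemma: given sets H₁,...,H_n ⊆ {1,...,n} and linear order constraints between some pairs of consecutive positions, insert after position i a new position with allowed set {c}, where c is a fresh value larger (in the relevant constraint orders) than all values allowed at position i and smaller than all values allowed at the old position i+1, and impose the order constraints i ≺ new and new ≺ (old i+1). Then the new instance (on n+1 positions and n+1 values) has a solution if and only if the original instance with NO order constraint between positions i and i+1 has a solution. -/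
/-!
Deleting position `i + 1` (which holds the fresh value `n + 1`) from a solution of the new
instance, and shifting the later positions down, gives a solution of the old instance without
the constraint between `i` and `i + 1`: every remaining constraint links the same two values as
before. Conversely, a solution of the old instance extends to one of the new instance by
inserting `n + 1` after position `i`; the two new constraints then hold automatically, because
`n + 1` is the largest value for `r₁` and the smallest for `r₂`.
-/

open Set Function

def shiftAbove (i p : ℕ) : ℕ := if p ≤ i then p else p + 1

def unshiftAbove (i p : ℕ) : ℕ := if p ≤ i then p else p - 1

def insertAt {α : Type*} (i : ℕ) (c : α) (σ : ℕ → α) : ℕ → α :=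
  update (σ ∘ unshiftAbove i) (i + 1) c

section Positions

variable {i p : ℕ}

theorem shiftAbove_of_le (h : p ≤ i) : shiftAbove i p = p := if_pos h

theorem shiftAbove_of_lt (h : i < p) : shiftAbove i p = p + 1 := if_neg h.not_ge

theorem invOn_unshiftAbove_shiftAbove {n : ℕ} :
    InvOn (unshiftAbove i) (shiftAbove i) (Icc 1 n) (Icc 1 (n + 1) \ {i + 1}) := by
  refine ⟨fun p _ => ?_, fun p hp => ?_⟩
  · simp only [shiftAbove, unshiftAbove]; split_ifs <;> omega
  · simp only [mem_Icc, mem_sdiff, mem_singleton_iff] at hp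
    simp only [shiftAbove, unshiftAbove]; split_ifs <;> omega

theorem bijOn_shiftAbove {n : ℕ} (hi : i ≤ n) :
    BijOn (shiftAbove i) (Icc 1 n) (Icc 1 (n + 1) \ {i + 1}) := by
  refine invOn_unshiftAbove_shiftAbove.bijOn (fun p hp => ?_) (fun p hp => ?_) <;>
    simp only [mem_Icc, mem_sdiff, mem_singleton_iff] at hp ⊢ <;>
    simp only [shiftAbove, unshiftAbove] <;> split_ifs <;> omega

theorem bijOn_unshiftAbove {n : ℕ} (hi : i ≤ n) :
    BijOn (unshiftAbove i) (Icc 1 (n + 1) \ {i + 1}) (Icc 1 n) :=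
  (bijOn_shiftAbove hi).symm invOn_unshiftAbove_shiftAbove.symm

variable {α : Type*} {c : α} {σ : ℕ → α}

theorem insertAt_of_le (h : p ≤ i) : insertAt i c σ p = σ p := by
  rw [insertAt, update_of_ne (by omega), comp_apply, unshiftAbove, if_pos h]

@[simp]
theorem insertAt_self : insertAt i c σ (i + 1) = c := update_self ..

theorem insertAt_of_lt (h : i + 1 < p) : insertAt i c σ p = σ (p - 1) := by
  rw [insertAt, update_of_ne (by omega), comp_apply, unshiftAbove, if_neg (by omega)]

end Positions

theorem Set.BijOn.comp_shiftAbove {n i : ℕ} {π : ℕ → ℕ}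
    (hπ : BijOn π (Icc 1 (n + 1)) (Icc 1 (n + 1))) (hπi : π (i + 1) = n + 1) (hi : i ≤ n) :
    BijOn (π ∘ shiftAbove i) (Icc 1 n) (Icc 1 n) := by
  have hdel := hπ.sdiff_singleton (a := i + 1) ⟨by omega, by omega⟩
  rw [hπi, Icc_sdiff_right, Ico_add_one_right_eq_Icc] at hdel
  exact hdel.comp (bijOn_shiftAbove hi)

theorem bijOn_insertAt {n i : ℕ} {σ : ℕ → ℕ} (hσ : BijOn σ (Icc 1 n) (Icc 1 n)) (hi : i ≤ n) :
    BijOn (insertAt i (n + 1) σ) (Icc 1 (n + 1)) (Icc 1 (n + 1)) := by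
  have hrest : BijOn (insertAt i (n + 1) σ) (Icc 1 (n + 1) \ {i + 1}) (Icc 1 n) :=
    (hσ.comp (bijOn_unshiftAbove hi)).congr fun p hp => (update_of_ne hp.2 _ _).symm
  have hfull := hrest.insert (a := i + 1) (by simp)
  rw [insertAt_self] at hfull
  convert hfull using 1 <;> ext p <;>
    simp only [mem_insert_iff, mem_sdiff, mem_Icc, mem_singleton_iff] <;> omega

theorem stmt_17_general (n : ℕ)
    (H : ℕ → Finset ℕ)
    (P : Finset ℕ)
    (r : ℕ → ℕ → ℕ → Prop)
    (i : ℕ) (hi1 : 1 ≤ i) (hi2 : i + 1 ≤ n) (hiP : i ∉ P) :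
    -- order for the pair (i, new): n+1 is the largest value
    let r₁ : ℕ → ℕ → Prop := fun x y =>
      (y = n + 1 ∧ x ≠ n + 1) ∨ (x ≠ n + 1 ∧ y ≠ n + 1 ∧ x < y)
    -- order for the pair (new, old i+1): n+1 is the smallest value
    let r₂ : ℕ → ℕ → Prop := fun x y =>
      (x = n + 1 ∧ y ≠ n + 1) ∨ (x ≠ n + 1 ∧ y ≠ n + 1 ∧ x < y)
    ((∃ π : ℕ → ℕ, Set.BijOn π (Set.Icc 1 (n + 1)) (Set.Icc 1 (n + 1)) ∧
        (∀ p, 1 ≤ p → p ≤ i → π p ∈ H p) ∧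
        π (i + 1) = n + 1 ∧
        (∀ p, i + 2 ≤ p → p ≤ n + 1 → π p ∈ H (p - 1)) ∧
        (∀ p ∈ P, p < i → r p (π p) (π (p + 1))) ∧
        (∀ p ∈ P, i < p → r p (π (p + 1)) (π (p + 2))) ∧
        r₁ (π i) (π (i + 1)) ∧ r₂ (π (i + 1)) (π (i + 2))) ↔
      (∃ π : ℕ → ℕ, Set.BijOn π (Set.Icc 1 n) (Set.Icc 1 n) ∧
        (∀ p, 1 ≤ p → p ≤ n → π p ∈ H p) ∧
        (∀ p ∈ P, r p (π p) (π (p + 1))))) := by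
  intro r₁ r₂
  constructor
  · rintro ⟨π, hπ, hle, hnew, hgt, hrlt, hrgt, -, -⟩
    refine ⟨π ∘ shiftAbove i, hπ.comp_shiftAbove hnew (by omega), fun p hp1 hpn => ?_,
      fun p hp => ?_⟩
    · rcases le_or_gt p i with h | h
      · simpa [shiftAbove_of_le h] using hle p hp1 h
      · simpa [shiftAbove_of_lt h] using hgt (p + 1) (by omega) (by omega)
    · rcases lt_or_gt_of_ne (ne_of_mem_of_not_mem hp hiP) with h | h
      · simpa [shiftAbove_of_le h.le, shiftAbove_of_le h] using hrlt p hp h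
      · simpa [shiftAbove_of_lt h, shiftAbove_of_lt (h.trans p.lt_succ_self)] using hrgt p hp h
  · rintro ⟨σ, hσ, hmem, hr⟩
    have hσi : σ i ≤ n := (hσ.mapsTo ⟨hi1, by omega⟩).2
    have hσi' : σ (i + 1) ≤ n := (hσ.mapsTo ⟨by omega, hi2⟩).2
    refine ⟨insertAt i (n + 1) σ, bijOn_insertAt hσ (by omega),
      fun p hp1 hp => ?_, insertAt_self, fun p hp1 hp => ?_, fun p hp h => ?_,
      fun p hp h => ?_, ?_, ?_⟩
    · rw [insertAt_of_le hp]; exact hmem p hp1 (by omega)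
    · rw [insertAt_of_lt (by omega)]; exact hmem (p - 1) (by omega) (by omega)
    · rw [insertAt_of_le h.le, insertAt_of_le h]; exact hr p hp
    · rw [insertAt_of_lt (by omega), insertAt_of_lt (by omega)]; exact hr p hp
    · exact Or.inl ⟨insertAt_self, by rw [insertAt_of_le le_rfl]; omega⟩
    · refine Or.inl ⟨insertAt_self, ?_⟩
      rw [insertAt_of_lt (by omega), show i + 2 - 1 = i + 1 by omega]; omega

/-- Dummy position lemma: an instance with allowed sets H₁,...,H_n ⊆ {1,...,n}
and order constraints r_p for positions p ∈ P (with no constraint between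
positions i and i+1, i.e. i ∉ P) has a solution iff the instance obtained by
inserting after position i a new position with allowed set {n+1} (n+1 being a
fresh value, made largest in the order constraining positions (i, new) and
smallest in the order constraining positions (new, old i+1)) has a solution. -/
theorem stmt_17 (n : ℕ) (hn : 1 ≤ n)
    (H : ℕ → Finset ℕ) (hH : ∀ p, H p ⊆ Finset.Icc 1 n)
    (P : Finset ℕ) (hP : ∀ p ∈ P, 1 ≤ p ∧ p + 1 ≤ n)
    (r : ℕ → ℕ → ℕ → Prop)
    (i : ℕ) (hi1 : 1 ≤ i) (hi2 : i + 1 ≤ n) (hiP : i ∉ P) :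
    -- order for the pair (i, new): n+1 is the largest value
    let r₁ : ℕ → ℕ → Prop := fun x y =>
      (y = n + 1 ∧ x ≠ n + 1) ∨ (x ≠ n + 1 ∧ y ≠ n + 1 ∧ x < y)
    -- order for the pair (new, old i+1): n+1 is the smallest value
    let r₂ : ℕ → ℕ → Prop := fun x y =>
      (x = n + 1 ∧ y ≠ n + 1) ∨ (x ≠ n + 1 ∧ y ≠ n + 1 ∧ x < y)
    ((∃ π : ℕ → ℕ, Set.BijOn π (Set.Icc 1 (n + 1)) (Set.Icc 1 (n + 1)) ∧
        (∀ p, 1 ≤ p → p ≤ i → π p ∈ H p) ∧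
        π (i + 1) = n + 1 ∧
        (∀ p, i + 2 ≤ p → p ≤ n + 1 → π p ∈ H (p - 1)) ∧
        (∀ p ∈ P, p < i → r p (π p) (π (p + 1))) ∧
        (∀ p ∈ P, i < p → r p (π (p + 1)) (π (p + 2))) ∧
        r₁ (π i) (π (i + 1)) ∧ r₂ (π (i + 1)) (π (i + 2))) ↔
      (∃ π : ℕ → ℕ, Set.BijOn π (Set.Icc 1 n) (Set.Icc 1 n) ∧
        (∀ p, 1 ≤ p → p ≤ n → π p ∈ H p) ∧
        (∀ p ∈ P, r p (π p) (π (p + 1))))) :=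
  stmt_17_general n H P r i hi1 hi2 hiP
end
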